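/- For every real number r with 1 < r < √2, the one-dimensional Lebesgue measure of the set {θ ∈ [0, 2π) : (r·cos θ, r·sin θ) ∈ Q} of angles whose corresponding point on the circle of radius r lies in the square Q = [−1,1] × [−1,1] equals 2π − 8·arccos(1/r); moreover 0 < 2π − 8·arccos(1/r) < 2π. Consequently the free boundary in configuration B, consisting of the circular arcs of radius r lying inside Q, has total length L(r) = r·(2π − 8·arccos(1/r)). -/

import Mathlib

open Real MeasureTheory

/-- The periodic cell `Q = [-1,1] × [-1,1]` of the porous medium. -/
def Qcell : Set (EuclideanSpace ℝ (Fin 2)) :=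
  {x | x 0 ∈ Set.Icc (-1 : ℝ) 1 ∧ x 1 ∈ Set.Icc (-1 : ℝ) 1}

/-- The circle of radius `r` centered at the origin, parametrized by angle. -/
noncomputable def circCurve (r : ℝ) : ℝ → EuclideanSpace ℝ (Fin 2) :=
  fun θ => (WithLp.equiv 2 (Fin 2 → ℝ)).symm ![r * Real.cos θ, r * Real.sin θ]

/-!
`Q` is the unit ball of the sup norm, so the point of angle `θ` on the circle of radius `r` lies
in `Q` iff `max |cos θ| |sin θ| ≤ 1/r`. This function has period `π/2`, and on the quarter
`[0, π/2]` the condition cuts out the arc `[α, π/2 - α]` with `α = arccos (1/r)`. Hence the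
angles in `[0, 2π)` form four disjoint arcs of length `π/2 - 2α`, and since the curve has
constant speed `r`, the interface has length `r (2π - 8α)`.
-/

open Set

lemma periodic_max_abs_cos_abs_sin :
    Function.Periodic (fun θ => max |cos θ| |sin θ|) (π / 2) := by
  intro θ
  simp only [cos_add_pi_div_two, sin_add_pi_div_two, abs_neg, max_comm]

lemma cos_le_iff_arccos_le {c x : ℝ} (hc₁ : -1 ≤ c) (hc₂ : c ≤ 1) (hx : x ∈ Icc 0 π) :
    cos x ≤ c ↔ arccos c ≤ x := by
  conv_lhs => rw [← cos_arccos hc₁ hc₂]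
  exact strictAntiOn_cos.le_iff_ge hx ⟨arccos_nonneg c, arccos_le_pi c⟩

lemma arccos_lt_pi_div_four {x : ℝ} (hx : √2 / 2 < x) : arccos x < π / 4 := by
  have hsqrt : 0 < √2 / 2 := by positivity
  rcases le_or_gt x 1 with hx₁ | hx₁
  · calc arccos x < arccos (√2 / 2) :=
          strictAntiOn_arccos ⟨by linarith, by linarith⟩ ⟨by linarith, hx₁⟩ hx
      _ = π / 4 := by rw [← cos_pi_div_four, arccos_cos (by positivity) (by linarith [pi_pos])]
  · rw [arccos_of_one_le hx₁.le]
    positivity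

lemma max_abs_cos_abs_sin_le_iff_of_mem_Icc {c φ : ℝ} (hc₁ : -1 ≤ c) (hc₂ : c ≤ 1)
    (hφ : φ ∈ Icc 0 (π / 2)) :
    max |cos φ| |sin φ| ≤ c ↔ φ ∈ Icc (arccos c) (π / 2 - arccos c) := by
  obtain ⟨hφ₀, hφ₁⟩ := hφ
  have hπ := pi_pos
  rw [abs_of_nonneg (cos_nonneg_of_mem_Icc ⟨by linarith, hφ₁⟩),
    abs_of_nonneg (sin_nonneg_of_nonneg_of_le_pi hφ₀ (by linarith)), max_le_iff,
    cos_le_iff_arccos_le hc₁ hc₂ ⟨hφ₀, by linarith⟩, ← cos_pi_div_two_sub,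
    cos_le_iff_arccos_le hc₁ hc₂ ⟨by linarith, by linarith⟩, mem_Icc]
  constructor <;> rintro ⟨h₁, h₂⟩ <;> constructor <;> linarith

def quarterArc (α : ℝ) (k : ℕ) : Set ℝ :=
  Icc (k * (π / 2) + α) ((k + 1) * (π / 2) - α)

lemma max_abs_cos_abs_sin_le_iff_mem_quarterArc {c θ : ℝ} {k : ℕ} (hc₁ : -1 ≤ c) (hc₂ : c ≤ 1)
    (hθ : θ ∈ Icc (k * (π / 2)) ((k + 1) * (π / 2))) :
    max |cos θ| |sin θ| ≤ c ↔ θ ∈ quarterArc (arccos c) k := by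
  have hshift := periodic_max_abs_cos_abs_sin.sub_nat_mul_eq k (x := θ)
  rw [← hshift, max_abs_cos_abs_sin_le_iff_of_mem_Icc hc₁ hc₂
    ⟨by linarith [hθ.1], by linarith [hθ.2]⟩, quarterArc, mem_Icc, mem_Icc]
  constructor <;> rintro ⟨h₁, h₂⟩ <;> constructor <;> linarith

lemma setOf_max_abs_cos_abs_sin_le {c : ℝ} (hc₁ : -1 ≤ c) (hc₂ : c < 1) :
    {θ | θ ∈ Ico 0 (2 * π) ∧ max |cos θ| |sin θ| ≤ c} =
      ⋃ k ∈ Finset.range 4, quarterArc (arccos c) k := by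
  have hπ := pi_pos
  have hα : 0 < arccos c := arccos_pos.2 hc₂
  ext θ
  simp only [mem_ofPred_eq, mem_iUnion, Finset.mem_range, exists_prop]
  constructor
  · rintro ⟨⟨hθ₀, hθ₁⟩, hle⟩
    set k := ⌊θ / (π / 2)⌋₊
    have hk₀ : k * (π / 2) ≤ θ := (le_div_iff₀ (by positivity)).1 (Nat.floor_le (by positivity))
    have hk₁ : θ < (k + 1) * (π / 2) :=
      (div_lt_iff₀ (by positivity)).1 (Nat.lt_floor_add_one _)
    have hk₄ : k < 4 := by
      have : (k : ℝ) < 4 := by nlinarith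
      exact_mod_cast this
    exact ⟨k, hk₄, (max_abs_cos_abs_sin_le_iff_mem_quarterArc hc₁ hc₂.le ⟨hk₀, hk₁.le⟩).1 hle⟩
  · rintro ⟨k, hk₄, hθ⟩
    have hk : (k : ℝ) ≤ 3 := by exact_mod_cast Nat.le_of_lt_succ hk₄
    obtain ⟨h₁, h₂⟩ := hθ
    refine ⟨⟨by nlinarith, by nlinarith⟩, ?_⟩
    exact (max_abs_cos_abs_sin_le_iff_mem_quarterArc hc₁ hc₂.le
      ⟨by linarith, by linarith⟩).2 ⟨h₁, h₂⟩

lemma volume_biUnion_quarterArc {α : ℝ} (hα : 0 < α) :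
    volume (⋃ k ∈ Finset.range 4, quarterArc α k) = ENNReal.ofReal (2 * π - 8 * α) := by
  have hdisj : Pairwise (Function.onFun Disjoint (quarterArc α)) := by
    refine (pairwise_disjoint_on _).2 fun m n hmn => Set.disjoint_left.2 ?_
    rintro θ ⟨-, hm⟩ ⟨hn, -⟩
    have : (m : ℝ) + 1 ≤ n := by exact_mod_cast hmn
    nlinarith [pi_pos]
  rw [measure_biUnion_finset (hdisj.set_pairwise _) fun _ _ => measurableSet_Icc]
  have hlen : ∀ k, volume (quarterArc α k) = ENNReal.ofReal (π / 2 - 2 * α) := fun k => by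
    rw [quarterArc, Real.volume_Icc]
    ring_nf
  rw [Finset.sum_congr rfl fun k _ => hlen k, Finset.sum_const, Finset.card_range,
    ← ENNReal.ofReal_nsmul, nsmul_eq_mul]
  ring_nf

lemma circCurve_mem_Qcell_iff {r : ℝ} (hr : 0 < r) (θ : ℝ) :
    circCurve r θ ∈ Qcell ↔ max |cos θ| |sin θ| ≤ 1 / r := by
  have key : ∀ x : ℝ, r * x ∈ Icc (-1) 1 ↔ |x| ≤ 1 / r := fun x => by
    rw [mem_Icc, ← abs_le, abs_mul, abs_of_pos hr, le_div_iff₀ hr, mul_comm]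
  exact (and_congr (key _) (key _)).trans max_le_iff.symm

lemma hasDerivAt_circCurve (r θ : ℝ) :
    HasDerivAt (circCurve r)
      ((WithLp.equiv 2 (Fin 2 → ℝ)).symm ![-(r * sin θ), r * cos θ]) θ := by
  have h : HasDerivAt (fun θ : ℝ => (![r * cos θ, r * sin θ] : Fin 2 → ℝ))
      ![-(r * sin θ), r * cos θ] θ := by
    rw [hasDerivAt_pi]
    intro i
    fin_cases i
    · simpa using (hasDerivAt_cos θ).const_mul r
    · simpa using (hasDerivAt_sin θ).const_mul r
  exact (EuclideanSpace.equiv (Fin 2) ℝ).symm.hasFDerivAt.comp_hasDerivAt θ h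

lemma norm_deriv_circCurve {r : ℝ} (hr : 0 ≤ r) (θ : ℝ) : ‖deriv (circCurve r) θ‖ = r := by
  rw [(hasDerivAt_circCurve r θ).deriv, EuclideanSpace.norm_eq, Fin.sum_univ_two]
  have hsq : ‖-(r * sin θ)‖ ^ 2 + ‖r * cos θ‖ ^ 2 = r ^ 2 := by
    rw [norm_neg, norm_mul, norm_mul, mul_pow, mul_pow, ← mul_add, Real.norm_eq_abs,
      Real.norm_eq_abs, Real.norm_eq_abs, sq_abs, sq_abs, sq_abs, sin_sq_add_cos_sq, mul_one]
  exact (congrArg Real.sqrt hsq).trans (Real.sqrt_sq hr)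

/-- Configuration B: for `1 < r < √2`, the set of angles `θ ∈ [0, 2π)` whose point
`(r cos θ, r sin θ)` lies in the cell `Q = [-1,1]²` has Lebesgue measure
`2π - 8 arccos (1/r)`, this quantity lies strictly between `0` and `2π`, and the
free boundary (the circular arcs of radius `r` inside `Q`) has total length
`L(r) = r (2π - 8 arccos (1/r))`. -/
theorem configB_interface_length (r : ℝ) (h1 : 1 < r) (h2 : r < Real.sqrt 2)
    (S : Set ℝ) (hS : S = {θ | θ ∈ Set.Ico 0 (2 * π) ∧ circCurve r θ ∈ Qcell}) :
    volume S = ENNReal.ofReal (2 * π - 8 * Real.arccos (1 / r)) ∧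
    0 < 2 * π - 8 * Real.arccos (1 / r) ∧
    2 * π - 8 * Real.arccos (1 / r) < 2 * π ∧
    ∫ θ in S, ‖deriv (circCurve r) θ‖ = r * (2 * π - 8 * Real.arccos (1 / r)) := by
  have hr : 0 < r := by linarith
  have hc : 1 / r < 1 := (div_lt_one hr).2 h1
  have hα₀ : 0 < arccos (1 / r) := arccos_pos.2 hc
  have hα₁ : arccos (1 / r) < π / 4 := by
    refine arccos_lt_pi_div_four ((div_lt_div_iff₀ two_pos hr).2 ?_)
    nlinarith [sq_sqrt (show (0 : ℝ) ≤ 2 by norm_num), sqrt_nonneg 2]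
  have hSarcs : S = ⋃ k ∈ Finset.range 4, quarterArc (arccos (1 / r)) k := by
    simp only [hS, circCurve_mem_Qcell_iff hr]
    exact setOf_max_abs_cos_abs_sin_le (by linarith [one_div_pos.2 hr]) hc
  have hvol : volume S = ENNReal.ofReal (2 * π - 8 * arccos (1 / r)) := by
    rw [hSarcs, volume_biUnion_quarterArc hα₀]
  have hpos : 0 < 2 * π - 8 * arccos (1 / r) := by linarith
  refine ⟨hvol, hpos, by linarith, ?_⟩
  rw [setIntegral_congr_fun (hSarcs ▸ Finset.measurableSet_biUnion _ fun _ _ => measurableSet_Icc)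
      fun θ _ => norm_deriv_circCurve hr.le θ, setIntegral_const, measureReal_def, hvol,
    ENNReal.toReal_ofReal hpos.le, smul_eq_mul, mul_comm]
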